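/- Let p ∈ ℝ, β ≠ 0, α ≠ 2β, and let f be a probability density function, positive and continuous on (x_i, x_f), with base point x₀. Let g = 𝔘_{α,β}[f] be its biparametric up transform. Then g is a probability density function and, whenever the integrals are finite, its p-th absolute moment equals the cumulative upper-moment of f: μ_p[g] = M_{p,α,β}[f] (both computed with the same base point x₀). -/
import Mathlib


open MeasureTheory Set Filter Topology

noncomputable section

/-- The open interval with extended-real endpoints, viewed as a set of reals. -/
def intIoo (a b : EReal) : Set ℝ := {x : ℝ | a < (x : EReal) ∧ (x : EReal) < b}

lemma intIoo_eq_preimage (a b : EReal) :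
    intIoo a b = Real.toEReal ⁻¹' Set.Ioo a b := rfl

lemma isOpen_intIoo (a b : EReal) : IsOpen (intIoo a b) := by
  rw [intIoo_eq_preimage]
  exact isOpen_Ioo.preimage continuous_coe_real_ereal

lemma measurableSet_intIoo (a b : EReal) : MeasurableSet (intIoo a b) :=
  (isOpen_intIoo a b).measurableSet

lemma ordConnected_intIoo (a b : EReal) : (intIoo a b).OrdConnected := by
  constructor
  intro x hx y hy z hz
  exact ⟨lt_of_lt_of_le hx.1 (EReal.coe_le_coe_iff.2 hz.1),
    lt_of_le_of_lt (EReal.coe_le_coe_iff.2 hz.2) hy.2⟩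

/-- the biparametric up transform `g = 𝔘_{α,β}[f]` is a pdf and its
`p`-th absolute moment equals the cumulative upper-moment: `μ_p[g] = M_{p,α,β}[f]`. -/
theorem moment_of_biparametric_up_transform_eq_cumulative_upper_moment
    (p α β : ℝ) (hβ : β ≠ 0) (hαβ : α ≠ 2 * β)
    (xi xf : EReal) (hif : xi < xf)
    (x₀ : ℝ) (hx₀l : xi ≤ (x₀ : EReal)) (hx₀r : (x₀ : EReal) ≤ xf)
    (f Y u g : ℝ → ℝ)
    (hf_meas : Measurable f)
    (hf_nonneg : ∀ x, 0 ≤ f x)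
    (hf_supp : ∀ x ∉ intIoo xi xf, f x = 0)
    (hf_int : (∫ x, f x) = 1)
    (hf_pos : ∀ x ∈ intIoo xi xf, 0 < f x)
    (hf_cont : ContinuousOn f (intIoo xi xf))
    (hY : ∀ x, Y x = ∫ t in x₀..x, f t ^ ((β - 1) / β))
    (hu_fin : ∀ x ∈ intIoo xi xf,
      IntegrableOn (fun r => |((α - 2 * β) / β) * Y r| ^ (β / (α - 2 * β)) * f r)
        (intIoo (x : EReal) xf))
    (hu : ∀ x ∈ intIoo xi xf,
      u x = ∫ r in intIoo (x : EReal) xf,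
        |((α - 2 * β) / β) * Y r| ^ (β / (α - 2 * β)) * f r)
    (hu_anti : StrictAntiOn u (intIoo xi xf))
    (hg : ∀ x ∈ intIoo xi xf,
      g (u x) = |((α - 2 * β) / β) * Y x| ^ (β / (2 * β - α)))
    (hg_supp : ∀ v ∉ u '' intIoo xi xf, g v = 0)
    (hfin1 : Integrable (fun v => |v| ^ p * g v))
    (hfin2 : ∀ x ∈ intIoo xi xf,
      IntegrableOn (fun r => |Y r| ^ (β / (α - 2 * β)) * f r) (intIoo (x : EReal) xf))
    (hfin3 : IntegrableOn
      (fun x : ℝ => |(∫ r in intIoo (x : EReal) xf, |Y r| ^ (β / (α - 2 * β)) * f r)| ^ p * f x)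
      (intIoo xi xf)) :
    ((∀ v, 0 ≤ g v) ∧ (∫ v, g v) = 1)
    ∧ (∫ v, |v| ^ p * g v)
        = |(α - 2 * β) / β| ^ (p * β / (α - 2 * β))
          * ∫ x in intIoo xi xf,
              |(∫ r in intIoo (x : EReal) xf,
                |∫ t in x₀..r, f t ^ ((β - 1) / β)| ^ (β / (α - 2 * β)) * f r)| ^ p
              * f x := by
  set I : Set ℝ := intIoo xi xf with hI_def
  set c : ℝ := (α - 2 * β) / β with hc_def
  set γ : ℝ := β / (α - 2 * β) with hγ_def
  set g₀ : ℝ → ℝ := fun t => f t ^ ((β - 1) / β) with hg₀_def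
  set h : ℝ → ℝ := fun r => |c * Y r| ^ γ * f r with hh_def
  have hα2β : α - 2 * β ≠ 0 := sub_ne_zero.2 hαβ
  have hc : c ≠ 0 := div_ne_zero hα2β hβ
  have hγ : γ ≠ 0 := div_ne_zero hβ hα2β
  have hI_open : IsOpen I := isOpen_intIoo xi xf
  have hI_meas : MeasurableSet I := hI_open.measurableSet
  have hI_oc : I.OrdConnected := ordConnected_intIoo xi xf
  -- membership facts
  have hmemI : ∀ {x t : ℝ}, x ∈ I → ∀ {b : ℝ}, b ∈ I → x ≤ t → t ≤ b → t ∈ I := by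
    intro x t hx b hb hxt htb
    exact hI_oc.out hx hb ⟨hxt, htb⟩
  have hnonneg_h : ∀ r, 0 ≤ h r := fun r =>
    mul_nonneg (Real.rpow_nonneg (abs_nonneg _) _) (hf_nonneg r)
  -- g₀ continuity / positivity on I
  have hg₀_cont : ContinuousOn g₀ I := by
    apply hf_cont.rpow_const
    intro x hx
    exact Or.inl (ne_of_gt (hf_pos x hx))
  have hg₀_pos : ∀ x ∈ I, 0 < g₀ x := fun x hx =>
    Real.rpow_pos_of_pos (hf_pos x hx) _
  -- expressing differences of u as integrals over Ioc
  have hIset : ∀ {a b : ℝ}, a ∈ I → b ∈ I → a < b →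
      intIoo (a : EReal) xf = Ioc a b ∪ intIoo (b : EReal) xf := by
    intro a b ha hb hab
    ext r
    constructor
    · rintro ⟨h1, h2⟩
      rcases le_or_gt r b with hrb | hrb
      · exact Or.inl ⟨EReal.coe_lt_coe_iff.1 h1, hrb⟩
      · exact Or.inr ⟨EReal.coe_lt_coe_iff.2 hrb, h2⟩
    · rintro (⟨h1, h2⟩ | ⟨h1, h2⟩)
      · exact ⟨EReal.coe_lt_coe_iff.2 h1,
          lt_of_le_of_lt (EReal.coe_le_coe_iff.2 h2) hb.2⟩
      · exact ⟨lt_trans (EReal.coe_lt_coe_iff.2 hab) h1, h2⟩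
  have husub : ∀ {a b : ℝ}, a ∈ I → b ∈ I → a < b →
      u a - u b = ∫ r in Ioc a b, h r := by
    intro a b ha hb hab
    have hsplit := hIset ha hb hab
    have hdisj : Disjoint (Ioc a b) (intIoo (b : EReal) xf) := by
      rw [Set.disjoint_left]
      rintro r ⟨_, hrb⟩ ⟨hbr, _⟩
      exact absurd (EReal.coe_lt_coe_iff.1 hbr) (not_lt.2 hrb)
    have hintA : IntegrableOn h (Ioc a b) := by
      have := hu_fin a ha
      rw [hsplit] at this
      exact this.mono_set subset_union_left
    have hintB : IntegrableOn h (intIoo (b : EReal) xf) := hu_fin b hb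
    rw [hu a ha, hu b hb]
    have : (∫ r in intIoo (a : EReal) xf, |c * Y r| ^ γ * f r)
        = (∫ r in Ioc a b, h r) + ∫ r in intIoo (b : EReal) xf, |c * Y r| ^ γ * f r := by
      rw [hsplit]
      exact setIntegral_union hdisj (measurableSet_intIoo _ _) hintA hintB
    rw [this]; ring
  -- interval integrability of h between points of I
  have hhint : ∀ {a b : ℝ}, a ∈ I → b ∈ I → IntervalIntegrable h volume a b := by
    have key : ∀ {a b : ℝ}, a ∈ I → b ∈ I → a ≤ b → IntervalIntegrable h volume a b := by
      intro a b ha hb hab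
      rw [intervalIntegrable_iff_integrableOn_Ioc_of_le hab]
      refine (hu_fin a ha).mono_set ?_
      rintro r ⟨h1, h2⟩
      exact ⟨EReal.coe_lt_coe_iff.2 h1,
        lt_of_le_of_lt (EReal.coe_le_coe_iff.2 h2) hb.2⟩
    intro a b ha hb
    rcases le_total a b with hab | hab
    · exact key ha hb hab
    · exact (key hb ha hab).symm
  -- key integrability claim for g₀ from x₀
  have K : ∀ x ∈ I, IntervalIntegrable g₀ volume x₀ x := by
    by_contra hK
    push_neg at hK
    obtain ⟨x₁, hx₁I, hx₁⟩ := hK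
    -- helper : pick a real point of I above a given point of I
    have habove : ∀ {w : ℝ}, w ∈ I → ∃ z : ℝ, w < z ∧ z ∈ I := by
      intro w hw
      obtain ⟨z, hz1, hz2⟩ := EReal.exists_between_coe_real hw.2
      exact ⟨z, EReal.coe_lt_coe_iff.1 hz1, lt_trans hw.1 hz1, hz2⟩
    have hbelow : ∀ {w : ℝ}, w ∈ I → ∃ z : ℝ, z < w ∧ z ∈ I := by
      intro w hw
      obtain ⟨z, hz1, hz2⟩ := EReal.exists_between_coe_real hw.1
      exact ⟨z, EReal.coe_lt_coe_iff.1 hz2, hz1, lt_trans hz2 hw.2⟩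
    rcases lt_trichotomy x₀ x₁ with hx01 | hx01 | hx01
    · -- Y vanishes on I ∩ [x₁, ∞)
      have hYzero : ∀ x ∈ I, x₁ ≤ x → Y x = 0 := by
        intro x hx hx1x
        rw [hY x]
        apply intervalIntegral.integral_undef
        intro hcontra
        refine hx₁ (hcontra.mono_set ?_)
        rw [uIcc_of_le (hx01.le.trans hx1x), uIcc_of_le hx01.le]
        exact Icc_subset_Icc le_rfl hx1x
      obtain ⟨x₂, hx12, hx₂I⟩ := habove hx₁I
      obtain ⟨x₃, hx23, hx₃I⟩ := habove hx₂I
      have : u x₂ - u x₃ = 0 := by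
        rw [husub hx₂I hx₃I hx23]
        have : EqOn h (fun _ => (0 : ℝ)) (Ioc x₂ x₃) := by
          intro r hr
          have hrI : r ∈ I := hmemI hx₂I hx₃I (le_of_lt hr.1) hr.2
          have : Y r = 0 := hYzero r hrI (le_trans (le_of_lt hx12) (le_of_lt hr.1))
          simp [hh_def, this, Real.zero_rpow hγ]
        rw [setIntegral_congr_fun measurableSet_Ioc this]
        simp
      have := hu_anti hx₂I hx₃I hx23
      linarith
    · exact hx₁ (hx01 ▸ IntervalIntegrable.refl)
    · -- Y vanishes on I ∩ (-∞, x₁]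
      have hYzero : ∀ x ∈ I, x ≤ x₁ → Y x = 0 := by
        intro x hx hx1x
        rw [hY x]
        apply intervalIntegral.integral_undef
        intro hcontra
        refine hx₁ (hcontra.mono_set ?_)
        rw [uIcc_of_ge (hx1x.trans hx01.le), uIcc_of_ge hx01.le]
        exact Icc_subset_Icc hx1x le_rfl
      obtain ⟨x₂, hx12, hx₂I⟩ := hbelow hx₁I
      obtain ⟨x₃, hx23, hx₃I⟩ := hbelow hx₂I
      have : u x₃ - u x₂ = 0 := by
        rw [husub hx₃I hx₂I hx23]
        have : EqOn h (fun _ => (0 : ℝ)) (Ioc x₃ x₂) := by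
          intro r hr
          have hrI : r ∈ I := hmemI hx₃I hx₂I (le_of_lt hr.1) hr.2
          have : Y r = 0 := hYzero r hrI (le_trans hr.2 (le_of_lt hx12))
          simp [hh_def, this, Real.zero_rpow hγ]
        rw [setIntegral_congr_fun measurableSet_Ioc this]
        simp
      have := hu_anti hx₃I hx₂I hx23
      linarith
  -- Y: derivative, continuity, sign
  have hYder : ∀ x ∈ I, HasDerivAt Y (g₀ x) x := by
    intro x hx
    have hfun : Y = fun y => ∫ t in x₀..y, g₀ t := funext hY
    rw [hfun]
    exact intervalIntegral.integral_hasDerivAt_right (K x hx)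
      (hg₀_cont.stronglyMeasurableAtFilter hI_open x hx)
      (hg₀_cont.continuousAt (hI_open.mem_nhds hx))
  have hYpos : ∀ x ∈ I, x₀ < x → 0 < Y x := by
    intro x hx h0x
    rw [hY x]
    apply intervalIntegral.intervalIntegral_pos_of_pos_on (K x hx) _ h0x
    intro t ht
    exact hg₀_pos t ⟨lt_of_le_of_lt hx₀l (EReal.coe_lt_coe_iff.2 ht.1),
      lt_trans (EReal.coe_lt_coe_iff.2 ht.2) hx.2⟩
  have hYneg : ∀ x ∈ I, x < x₀ → Y x < 0 := by
    intro x hx hx0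
    have hpos : 0 < ∫ t in x..x₀, g₀ t := by
      apply intervalIntegral.intervalIntegral_pos_of_pos_on (K x hx).symm _ hx0
      intro t ht
      exact hg₀_pos t ⟨lt_trans hx.1 (EReal.coe_lt_coe_iff.2 ht.1),
        lt_of_lt_of_le (EReal.coe_lt_coe_iff.2 ht.2) hx₀r⟩
    rw [hY x, intervalIntegral.integral_symm]
    linarith
  have hYne : ∀ x ∈ I, x ≠ x₀ → Y x ≠ 0 := by
    intro x hx hne
    rcases lt_or_gt_of_ne hne with h1 | h1
    · exact ne_of_lt (hYneg x hx h1)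
    · exact ne_of_gt (hYpos x hx h1)
  -- the punctured interval
  set s : Set ℝ := I \ {x₀} with hs_def
  have hs_open : IsOpen s := hI_open.sdiff isClosed_singleton
  have hs_meas : MeasurableSet s := hs_open.measurableSet
  have hssubI : s ⊆ I := diff_subset
  have hh_cont : ContinuousOn h s := by
    intro x hx
    apply ContinuousAt.continuousWithinAt
    have hxI : x ∈ I := hx.1
    have hxne : x ≠ x₀ := fun hh => hx.2 (by simp [hh])
    have hYc : ContinuousAt Y x := (hYder x hxI).continuousAt
    have habs : ContinuousAt (fun y => |c * Y y|) x := (continuousAt_const.mul hYc).abs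
    have hne : |c * Y x| ≠ 0 := by
      rw [abs_ne_zero]
      exact mul_ne_zero hc (hYne x hxI hxne)
    exact (habs.rpow_const (Or.inl hne)).mul (hf_cont.continuousAt (hI_open.mem_nhds hxI))
  have hude : ∀ x₁ ∈ I, ∀ y ∈ I, u y = u x₁ - ∫ t in x₁..y, h t := by
    intro x₁ h₁ y hy
    rcases lt_trichotomy y x₁ with hlt | heq | hgt
    · rw [intervalIntegral.integral_symm y x₁, intervalIntegral.integral_of_le hlt.le]
      linarith [husub hy h₁ hlt]
    · rw [heq, intervalIntegral.integral_same]
      ring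
    · rw [intervalIntegral.integral_of_le hgt.le]
      linarith [husub h₁ hy hgt]
  have huder : ∀ x ∈ s, HasDerivAt u (-(h x)) x := by
    intro x hx
    have hxI : x ∈ I := hx.1
    have hD : HasDerivAt (fun y => ∫ t in x..y, h t) (h x) x :=
      intervalIntegral.integral_hasDerivAt_right IntervalIntegrable.refl
        (hh_cont.stronglyMeasurableAtFilter hs_open x hx)
        (hh_cont.continuousAt (hs_open.mem_nhds hx))
    have hD2 : HasDerivAt (fun y => u x - ∫ t in x..y, h t) (-(h x)) x :=
      hD.const_sub (u x)
    refine hD2.congr_of_eventuallyEq ?_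
    filter_upwards [hI_open.mem_nhds hxI] with y hy
    exact hude x hxI y hy
  have hu_injOn : InjOn u s := (hu_anti.injOn).mono hssubI
  have hu_contOn_s : ContinuousOn u s := fun x hx =>
    ((huder x hx).continuousAt).continuousWithinAt
  set T : Set ℝ := u '' s with hT_def
  have hT_meas : MeasurableSet T := by
    have himg : ∀ J : Set ℝ, J ⊆ s → J.OrdConnected → MeasurableSet (u '' J) := by
      intro J hJs hJoc
      have : IsPreconnected (u '' J) :=
        (isPreconnected_iff_ordConnected.2 hJoc).image u (hu_contOn_s.mono hJs)
      exact (isPreconnected_iff_ordConnected.1 this).measurableSet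
    have hs_split : s = (I ∩ Iio x₀) ∪ (I ∩ Ioi x₀) := by
      ext x
      constructor
      · rintro ⟨hxI, hxne⟩
        rcases lt_or_gt_of_ne (show x ≠ x₀ from fun hh => hxne (by simp [hh])) with h1 | h1
        · exact Or.inl ⟨hxI, h1⟩
        · exact Or.inr ⟨hxI, h1⟩
      · rintro (⟨hxI, hlt⟩ | ⟨hxI, hgt⟩)
        · exact ⟨hxI, by simp [(mem_Iio.1 hlt).ne]⟩
        · exact ⟨hxI, by simp [(mem_Ioi.1 hgt).ne']⟩
    rw [hT_def, hs_split, image_union]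
    refine MeasurableSet.union ?_ ?_
    · exact himg _ (fun x hx => by rw [hs_split]; exact Or.inl hx) (hI_oc.inter ordConnected_Iio)
    · exact himg _ (fun x hx => by rw [hs_split]; exact Or.inr hx) (hI_oc.inter ordConnected_Ioi)
  -- change of variables
  have hCOV : ∀ G : ℝ → ℝ, (∫ v in T, G v) = ∫ x in s, h x * G (u x) := by
    intro G
    have h2 := integral_image_eq_integral_abs_deriv_smul hs_meas
      (fun x hx => (huder x hx).hasDerivWithinAt) hu_injOn G
    rw [hT_def, h2]
    apply setIntegral_congr_fun hs_meas
    intro x hx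
    show |(-(h x))| • G (u x) = h x * G (u x)
    rw [abs_neg, abs_of_nonneg (hnonneg_h x), smul_eq_mul]
  have hcancel : ∀ x ∈ s, h x * g (u x) = f x := by
    intro x hx
    have hxI : x ∈ I := hx.1
    have hxne : x ≠ x₀ := fun hh => hx.2 (by simp [hh])
    have hA : (0:ℝ) < |c * Y x| := abs_pos.2 (mul_ne_zero hc (hYne x hxI hxne))
    have hAne : |c * Y x| ^ γ ≠ 0 := ne_of_gt (Real.rpow_pos_of_pos hA γ)
    have hexp : β / (2 * β - α) = -γ := by
      rw [hγ_def, show 2 * β - α = -(α - 2 * β) by ring, div_neg]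
    rw [hg x hxI, hexp, Real.rpow_neg (abs_nonneg _)]
    show |c * Y x| ^ γ * f x * (|c * Y x| ^ γ)⁻¹ = f x
    rw [mul_right_comm, mul_inv_cancel₀ hAne, one_mul]
  have hsae : s =ᵐ[(volume : Measure ℝ)] I := by
    rw [hs_def]
    exact diff_ae_eq_self.2 (measure_mono_null inter_subset_right (measure_singleton _))
  -- reduction of full-space integrals to T
  have hindic : ∀ G : ℝ → ℝ, (∀ v ∉ u '' I, G v = 0) → (∫ v, G v) = ∫ v in T, G v := by
    intro G hG0
    have hsub : {v | ¬ G v = T.indicator G v} ⊆ {u x₀} := by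
      intro v hv
      by_contra hne
      apply hv
      by_cases hvT : v ∈ T
      · rw [indicator_of_mem hvT]
      · rw [indicator_of_notMem hvT]
        apply hG0
        rintro ⟨x, hxI, hxv⟩
        have hxx : x ≠ x₀ := by
          intro hh
          exact hne (by rw [← hxv, hh]; exact rfl)
        exact hvT ⟨x, ⟨hxI, by simp [hxx]⟩, hxv⟩
    have hae : G =ᵐ[(volume : Measure ℝ)] T.indicator G := by
      rw [Filter.EventuallyEq, ae_iff]
      exact measure_mono_null hsub (measure_singleton _)
    rw [integral_congr_ae hae, integral_indicator hT_meas]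
  -- part 1 : g is a pdf
  have hint1 : (∫ v, g v) = 1 := by
    rw [hindic g hg_supp, hCOV g]
    have h1 : (∫ x in s, h x * g (u x)) = ∫ x in s, f x :=
      setIntegral_congr_fun hs_meas fun x hx => hcancel x hx
    rw [h1, setIntegral_congr_set hsae]
    have h2 : (∫ x in I, f x) = ∫ x, f x := by
      rw [← integral_indicator hI_meas]
      congr 1
      funext x
      by_cases hxI : x ∈ I
      · rw [indicator_of_mem hxI]
      · rw [indicator_of_notMem hxI, hf_supp x hxI]
    rw [h2, hf_int]
  -- part 2 : the moment identity
  have hmom : (∫ v, |v| ^ p * g v) = ∫ x in I, |u x| ^ p * f x := by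
    rw [hindic (fun v => |v| ^ p * g v)
        (fun v hv => by show |v| ^ p * g v = 0; rw [hg_supp v hv, mul_zero]),
      hCOV (fun v => |v| ^ p * g v)]
    have h1 : (∫ x in s, h x * (|u x| ^ p * g (u x)))
        = ∫ x in s, |u x| ^ p * f x := by
      apply setIntegral_congr_fun hs_meas
      intro x hx
      calc h x * (|u x| ^ p * g (u x)) = |u x| ^ p * (h x * g (u x)) := by ring
        _ = |u x| ^ p * f x := by rw [hcancel x hx]
    rw [h1, setIntegral_congr_set hsae]
  refine ⟨⟨?_, hint1⟩, ?_⟩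
  · intro v
    by_cases hv : v ∈ u '' I
    · obtain ⟨x, hxI, rfl⟩ := hv
      rw [hg x hxI]
      exact Real.rpow_nonneg (abs_nonneg _) _
    · rw [hg_supp v hv]
  · rw [hmom]
    simp only [← hY]
    have hux : EqOn (fun x => |u x| ^ p * f x)
        (fun x => |c| ^ (p * β / (α - 2 * β))
          * (|∫ r in intIoo (x : EReal) xf, |Y r| ^ γ * f r| ^ p * f x)) I := by
      intro x hx
      have h1 : u x = |c| ^ γ * ∫ r in intIoo (x : EReal) xf, |Y r| ^ γ * f r := by
        rw [hu x hx, ← integral_const_mul]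
        congr 1
        funext r
        show |c * Y r| ^ γ * f r = |c| ^ γ * (|Y r| ^ γ * f r)
        rw [abs_mul, Real.mul_rpow (abs_nonneg _) (abs_nonneg _), mul_assoc]
      simp only
      rw [h1, abs_mul, abs_of_nonneg (Real.rpow_nonneg (abs_nonneg c) γ),
        Real.mul_rpow (Real.rpow_nonneg (abs_nonneg c) γ) (abs_nonneg _),
        ← Real.rpow_mul (abs_nonneg c),
        show γ * p = p * β / (α - 2 * β) from by rw [hγ_def]; ring]
      ring
    rw [setIntegral_congr_fun hI_meas hux, integral_const_mul]
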